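/- In a weak model category, the homotopy relation on morphisms from a cofibrant object A to a fibrant object X, defined via any cylinder for A, is an equivalence relation. -/

import Mathlib

open CategoryTheory Limits

universe v u

variable (C : Type u) [Category.{v} C] [HasFiniteLimits C] [HasFiniteColimits C]

/-- A weak model structure in the sense of Henry: classes of cofibrations and fibrations
(cofibrations have cofibrant domains, fibrations have fibrant codomains; each class
contains isomorphisms between cofibrant resp. fibrant objects, is closed under
composition, and is stable under pushout resp. pullback), together with the
factorisation axiom, the relative strong cylinder axiom, and the relative strong
path object axiom.  Acyclic (co)fibrations are the (co)fibrations with the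
(left/right) lifting property against all (fibrations/cofibrations). -/
structure WeakModelStructure where
  Cof : MorphismProperty C
  Fib : MorphismProperty C
  cof_bot : Cof (initial.to (⊥_ C))
  cof_dom : ∀ {A B : C} (i : A ⟶ B), Cof i → Cof (initial.to A)
  cof_iso : ∀ {A B : C} (e : A ⟶ B), IsIso e → Cof (initial.to A) → Cof e
  cof_comp : ∀ {A B D : C} (i : A ⟶ B) (j : B ⟶ D), Cof i → Cof j → Cof (i ≫ j)
  cof_pushout : ∀ {A B D : C} (i : A ⟶ B) (f : A ⟶ D), Cof i → Cof (initial.to D) →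
    Cof (pushout.inr i f)
  fib_top : Fib (terminal.from (⊤_ C))
  fib_cod : ∀ {X Y : C} (p : X ⟶ Y), Fib p → Fib (terminal.from Y)
  fib_iso : ∀ {X Y : C} (e : X ⟶ Y), IsIso e → Fib (terminal.from Y) → Fib e
  fib_comp : ∀ {X Y Z : C} (p : X ⟶ Y) (q : Y ⟶ Z), Fib p → Fib q → Fib (p ≫ q)
  fib_pullback : ∀ {X Y Z : C} (p : X ⟶ Y) (f : Z ⟶ Y), Fib p → Fib (terminal.from Z) →
    Fib (pullback.fst f p)
  /-- any morphism from a cofibrant object to a fibrant object factors as a cofibration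
  followed by an acyclic fibration -/
  fact₁ : ∀ {A X : C} (f : A ⟶ X), Cof (initial.to A) → Fib (terminal.from X) →
    ∃ (Z : C) (i : A ⟶ Z) (p : Z ⟶ X), Cof i ∧
      (Fib p ∧ ∀ ⦃A' B' : C⦄ (j : A' ⟶ B'), Cof j → HasLiftingProperty j p) ∧
      i ≫ p = f
  /-- any morphism from a cofibrant object to a fibrant object factors as an acyclic
  cofibration followed by a fibration -/
  fact₂ : ∀ {A X : C} (f : A ⟶ X), Cof (initial.to A) → Fib (terminal.from X) →
    ∃ (Z : C) (i : A ⟶ Z) (p : Z ⟶ X),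
      (Cof i ∧ ∀ ⦃X' Y' : C⦄ (q : X' ⟶ Y'), Fib q → HasLiftingProperty i q) ∧
      Fib p ∧ i ≫ p = f
  /-- every cofibration with fibrant codomain admits a relative strong cylinder -/
  cylinder_axiom : ∀ {A B : C} (j : A ⟶ B), Cof j → Fib (terminal.from B) →
    ∃ (I : C) (lneg lpos : B ⟶ I) (σ : I ⟶ B) (h : j ≫ lneg = j ≫ lpos),
      Cof (pushout.desc lneg lpos h) ∧
      (Cof lneg ∧ ∀ ⦃X' Y' : C⦄ (q : X' ⟶ Y'), Fib q → HasLiftingProperty lneg q) ∧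
      lneg ≫ σ = 𝟙 B ∧ lpos ≫ σ = 𝟙 B
  /-- every fibration with cofibrant domain admits a relative strong path object -/
  path_axiom : ∀ {A X : C} (p : A ⟶ X), Fib p → Cof (initial.to A) →
    ∃ (P : C) (qneg qpos : P ⟶ A) (σ : A ⟶ P) (h : qneg ≫ p = qpos ≫ p),
      Fib (pullback.lift qneg qpos h) ∧
      (Fib qneg ∧ ∀ ⦃A' B' : C⦄ (i : A' ⟶ B'), Cof i → HasLiftingProperty i qneg) ∧
      σ ≫ qneg = 𝟙 A ∧ σ ≫ qpos = 𝟙 A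

variable {C}

/-- A cylinder for a cofibrant object `A`: a cofibration `(jneg, jpos) : A ⊔ A ↪ I` whose
first leg is an acyclic cofibration, such that the codiagonal factors through it up to
an acyclic cofibration `d : A ↪ D`. -/
def IsCylinder (W : WeakModelStructure C) (A I : C) (jneg jpos : A ⟶ I) : Prop :=
  W.Cof (coprod.desc jneg jpos) ∧
    (W.Cof jneg ∧ ∀ ⦃X' Y' : C⦄ (q : X' ⟶ Y'), W.Fib q → HasLiftingProperty jneg q) ∧
    ∃ (D : C) (d : A ⟶ D) (h : I ⟶ D),
      (W.Cof d ∧ ∀ ⦃X' Y' : C⦄ (q : X' ⟶ Y'), W.Fib q → HasLiftingProperty d q) ∧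
      jneg ≫ h = d ∧ jpos ≫ h = d

/-- The homotopy relation: `f ∼ g` when they extend along the two legs of some cylinder. -/
def Homotopic (W : WeakModelStructure C) {A X : C} (f g : A ⟶ X) : Prop :=
  ∃ (I : C) (jneg jpos : A ⟶ I), IsCylinder W A I jneg jpos ∧
    ∃ h : I ⟶ X, jneg ≫ h = f ∧ jpos ≫ h = g

/-!
Choose an acyclic fibration `ρ : X' ⟶ X` with `X'` bifibrant: maps out of the cofibrant `A`, and
homotopies between them, lift along `ρ`, so it suffices to treat `X'`. It has a strong path object
`(q₀, q₁) : P ⟶ X' × X'`. Lifting the acyclic cofibration `j₀` of any cylinder against the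
fibration `(q₀, q₁)` appends a cylinder homotopy to a path homotopy, on either leg; lifting
`A ⊔ A ⟶ I` against the acyclic fibration `q₀` turns a path homotopy into a homotopy on a cylinder
`I` made from a strong cylinder of a fibrant replacement of `A`. So homotopy into `X'` agrees with
path homotopy, which is reflexive via the section `X' ⟶ P` and closed under appending homotopies.
-/

attribute [local simp] coprod.inl_desc coprod.inr_desc coprod.inl_desc_assoc coprod.inr_desc_assoc
  pushout.inl_desc pushout.inr_desc pullback.lift_fst pullback.lift_snd

theorem Equivalence.of_surjective {α β : Sort*} {r : β → β → Prop} {s : α → α → Prop}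
    (hs : Equivalence s) {f : α → β} (hf : Function.Surjective f)
    (hrs : ∀ a b, r (f a) (f b) ↔ s a b) : Equivalence r where
  refl b := by
    obtain ⟨a, rfl⟩ := hf b
    exact (hrs a a).2 (hs.refl a)
  symm {b₁ b₂} := by
    obtain ⟨a₁, rfl⟩ := hf b₁
    obtain ⟨a₂, rfl⟩ := hf b₂
    simpa only [hrs] using hs.symm
  trans {b₁ b₂ b₃} := by
    obtain ⟨a₁, rfl⟩ := hf b₁
    obtain ⟨a₂, rfl⟩ := hf b₂
    obtain ⟨a₃, rfl⟩ := hf b₃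
    simpa only [hrs] using hs.trans

lemma exists_lift_of_coprod_desc {𝒞 : Type*} [Category 𝒞] {A I X Y : 𝒞}
    [HasBinaryCoproduct A A] {j₀ j₁ : A ⟶ I} {p : X ⟶ Y} [HasLiftingProperty (coprod.desc j₀ j₁) p]
    {a b : A ⟶ X} {H : I ⟶ Y} (h₀ : j₀ ≫ H = a ≫ p) (h₁ : j₁ ≫ H = b ≫ p) :
    ∃ L : I ⟶ X, j₀ ≫ L = a ∧ j₁ ≫ L = b ∧ L ≫ p = H := by
  have sq : CommSq (coprod.desc a b) (coprod.desc j₀ j₁) p H := ⟨by ext <;> simp [h₀, h₁]⟩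
  exact ⟨sq.lift,
    by simpa only [coprod.inl_desc_assoc, coprod.inl_desc] using coprod.inl ≫= sq.fac_left,
    by simpa only [coprod.inr_desc_assoc, coprod.inr_desc] using coprod.inr ≫= sq.fac_left,
    sq.fac_right⟩

namespace WeakModelStructure

variable (W : WeakModelStructure C)

def AcyclicCof {A B : C} (i : A ⟶ B) : Prop :=
  W.Cof i ∧ ∀ ⦃X' Y' : C⦄ (q : X' ⟶ Y'), W.Fib q → HasLiftingProperty i q

def AcyclicFib {X Y : C} (p : X ⟶ Y) : Prop :=
  W.Fib p ∧ ∀ ⦃A' B' : C⦄ (j : A' ⟶ B'), W.Cof j → HasLiftingProperty j p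

def IsPathObject (X P : C) (q₀ q₁ : P ⟶ X) : Prop :=
  W.Fib (pullback.lift q₀ q₁ (terminal.hom_ext _ _) :
      P ⟶ pullback (terminal.from X) (terminal.from X)) ∧
    W.AcyclicFib q₀ ∧ ∃ s : X ⟶ P, s ≫ q₀ = 𝟙 X ∧ s ≫ q₁ = 𝟙 X

def PathHomotopic {𝒞 : Type*} [Category 𝒞] {A P X : 𝒞} (q₀ q₁ : P ⟶ X) (u v : A ⟶ X) : Prop :=
  ∃ K : A ⟶ P, K ≫ q₀ = u ∧ K ≫ q₁ = v

variable {W}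

lemma cofibrant_cod {A B : C} {i : A ⟶ B} (hi : W.Cof i) : W.Cof (initial.to B) := by
  simpa only [initial.to_comp] using W.cof_comp _ i (W.cof_dom i hi) hi

lemma fibrant_dom {X Y : C} {p : X ⟶ Y} (hp : W.Fib p) : W.Fib (terminal.from X) := by
  simpa only [terminal.comp_from] using W.fib_comp p _ hp (W.fib_cod p hp)

lemma cof_of_isPushout {A B D P : C} {i : A ⟶ B} {f : A ⟶ D} {inl : B ⟶ P} {inr : D ⟶ P}
    (h : IsPushout i f inl inr) (hi : W.Cof i) (hD : W.Cof (initial.to D)) : W.Cof inr := by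
  have hinr := W.cof_pushout i f hi hD
  rw [← h.inr_isoPushout_inv]
  exact W.cof_comp _ _ hinr (W.cof_iso _ inferInstance (cofibrant_cod hinr))

lemma cofibrant_coprod {B₁ B₂ : C} (h₁ : W.Cof (initial.to B₁)) (h₂ : W.Cof (initial.to B₂)) :
    W.Cof (initial.to (B₁ ⨿ B₂)) :=
  cofibrant_cod (cof_of_isPushout (IsPushout.of_hasBinaryCoproduct' B₁ B₂) h₁ h₂)

lemma cof_coprod_map_id {A B T : C} {i : A ⟶ B} (hi : W.Cof i) (hT : W.Cof (initial.to T)) :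
    W.Cof (coprod.map i (𝟙 T)) :=
  cof_of_isPushout (IsPushout.of_coprod_inl_with_id i T).flip hi
    (cofibrant_coprod (W.cof_dom i hi) hT)

lemma cof_coprod_id_map {A B T : C} {i : A ⟶ B} (hi : W.Cof i) (hT : W.Cof (initial.to T)) :
    W.Cof (coprod.map (𝟙 T) i) := by
  have h : IsPushout i coprod.inr coprod.inr (coprod.map (𝟙 T) i) :=
    (IsPushout.of_coprod_inl_with_id i T).flip.of_iso (Iso.refl _) (Iso.refl _)
      (coprod.braiding A T) (coprod.braiding B T) (by simp) (by simp) (by simp)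
      (by ext <;> simp)
  exact cof_of_isPushout h hi (cofibrant_coprod hT (W.cof_dom i hi))

lemma cof_coprod_map {A B A' B' : C} {i : A ⟶ B} {i' : A' ⟶ B'} (hi : W.Cof i)
    (hi' : W.Cof i') : W.Cof (coprod.map i i') := by
  simpa only [coprod.map_map, Category.comp_id, Category.id_comp] using
    W.cof_comp _ _ (cof_coprod_map_id hi (W.cof_dom i' hi'))
      (cof_coprod_id_map hi' (cofibrant_cod hi))

lemma cof_coprod_desc {B I : C} {j₀ j₁ : B ⟶ I} (hB : W.Cof (initial.to B))
    (h : initial.to B ≫ j₀ = initial.to B ≫ j₁) (hj : W.Cof (pushout.desc j₀ j₁ h)) :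
    W.Cof (coprod.desc j₀ j₁) := by
  let e := (IsPushout.of_hasBinaryCoproduct' B B).isoPushout
  have he : coprod.desc j₀ j₁ = e.hom ≫ pushout.desc j₀ j₁ h := by ext <;> simp [e]
  rw [he]
  exact W.cof_comp _ _ (W.cof_iso _ inferInstance (cofibrant_coprod hB hB)) hj

lemma AcyclicCof.comp {A B D : C} {i : A ⟶ B} {j : B ⟶ D} (hi : W.AcyclicCof i)
    (hj : W.AcyclicCof j) : W.AcyclicCof (i ≫ j) :=
  ⟨W.cof_comp i j hi.1 hj.1, fun _ _ q hq =>
    have := hi.2 q hq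
    have := hj.2 q hq
    inferInstance⟩

lemma AcyclicCof.exists_extension {A B X : C} {i : A ⟶ B} (hi : W.AcyclicCof i)
    (hX : W.Fib (terminal.from X)) (u : A ⟶ X) : ∃ e : B ⟶ X, i ≫ e = u := by
  have := hi.2 _ hX
  have sq : CommSq u i (terminal.from X) (terminal.from B) := ⟨terminal.hom_ext _ _⟩
  exact ⟨sq.lift, sq.fac_left⟩

lemma AcyclicFib.exists_lift {A X Y : C} {p : X ⟶ Y} (hp : W.AcyclicFib p)
    (hA : W.Cof (initial.to A)) (f : A ⟶ Y) : ∃ f' : A ⟶ X, f' ≫ p = f := by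
  have := hp.2 _ hA
  have sq : CommSq (initial.to X) (initial.to A) p f := ⟨initial.hom_ext _ _⟩
  exact ⟨sq.lift, sq.fac_right⟩

lemma exists_acyclicCof_to_fibrant {A : C} (hA : W.Cof (initial.to A)) :
    ∃ (Z : C) (i : A ⟶ Z), W.AcyclicCof i ∧ W.Fib (terminal.from Z) := by
  obtain ⟨Z, i, p, hi, hp, -⟩ := W.fact₂ (terminal.from A) hA W.fib_top
  exact ⟨Z, i, hi, fibrant_dom hp⟩

lemma exists_acyclicFib_from_cofibrant {X : C} (hX : W.Fib (terminal.from X)) :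
    ∃ (X' : C) (ρ : X' ⟶ X), W.AcyclicFib ρ ∧ W.Cof (initial.to X') := by
  obtain ⟨X', i, ρ, hi, hρ, -⟩ := W.fact₁ (initial.to X) W.cof_bot hX
  exact ⟨X', ρ, hρ, cofibrant_cod hi⟩

lemma exists_isCylinder {A : C} (hA : W.Cof (initial.to A)) :
    ∃ (I : C) (j₀ j₁ : A ⟶ I), IsCylinder W A I j₀ j₁ := by
  obtain ⟨Z, i, hi, hZ⟩ := exists_acyclicCof_to_fibrant hA
  obtain ⟨I, l₀, l₁, σ, h, hl, hl₀, hσ₀, hσ₁⟩ :=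
    W.cylinder_axiom (initial.to Z) (cofibrant_cod hi.1) hZ
  refine ⟨I, i ≫ l₀, i ≫ l₁, ?_, hi.comp hl₀, Z, i, σ, hi, by simp [hσ₀], by simp [hσ₁]⟩
  rw [← coprod.map_desc]
  exact W.cof_comp _ _ (cof_coprod_map hi.1 hi.1) (cof_coprod_desc (cofibrant_cod hi.1) h hl)

lemma exists_isPathObject {X : C} (hXc : W.Cof (initial.to X)) (hXf : W.Fib (terminal.from X)) :
    ∃ (P : C) (q₀ q₁ : P ⟶ X), W.IsPathObject X P q₀ q₁ := by
  obtain ⟨P, q₀, q₁, s, _, hq, hq₀, hs₀, hs₁⟩ := W.path_axiom (terminal.from X) hXf hXc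
  exact ⟨P, q₀, q₁, hq, hq₀, s, hs₀, hs₁⟩

lemma _root_.IsCylinder.exists_const {A I X : C} {j₀ j₁ : A ⟶ I} (hI : IsCylinder W A I j₀ j₁)
    (hX : W.Fib (terminal.from X)) (u : A ⟶ X) : ∃ c : I ⟶ X, j₀ ≫ c = u ∧ j₁ ≫ c = u := by
  obtain ⟨-, -, D, d, σ, hd, hσ₀, hσ₁⟩ := hI
  obtain ⟨e, he⟩ := AcyclicCof.exists_extension hd hX u
  exact ⟨σ ≫ e, by rw [reassoc_of% hσ₀, he], by rw [reassoc_of% hσ₁, he]⟩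

lemma IsPathObject.pathHomotopic_refl {A P X : C} {q₀ q₁ : P ⟶ X}
    (hP : W.IsPathObject X P q₀ q₁) (u : A ⟶ X) : PathHomotopic q₀ q₁ u u :=
  let ⟨s, hs₀, hs₁⟩ := hP.2.2
  ⟨u ≫ s, by simp [hs₀], by simp [hs₁]⟩

lemma PathHomotopic.of_comp_acyclicCof {A I P X : C} {j : A ⟶ I} {q₀ q₁ : P ⟶ X}
    {G₀ G₁ : I ⟶ X} (hj : W.AcyclicCof j)
    (hq : W.Fib (pullback.lift q₀ q₁ (terminal.hom_ext _ _) :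
      P ⟶ pullback (terminal.from X) (terminal.from X)))
    (h : PathHomotopic q₀ q₁ (j ≫ G₀) (j ≫ G₁)) : PathHomotopic q₀ q₁ G₀ G₁ := by
  obtain ⟨K, hK₀, hK₁⟩ := h
  have := hj.2 _ hq
  have sq : CommSq K j (pullback.lift q₀ q₁ (terminal.hom_ext _ _))
      (pullback.lift G₀ G₁ (terminal.hom_ext _ _) :
        I ⟶ pullback (terminal.from X) (terminal.from X)) :=
    ⟨by apply pullback.hom_ext <;> simp [hK₀, hK₁]⟩
  exact ⟨sq.lift,
    by simpa only [Category.assoc, pullback.lift_fst] using sq.fac_right =≫ pullback.fst _ _,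
    by simpa only [Category.assoc, pullback.lift_snd] using sq.fac_right =≫ pullback.snd _ _⟩

lemma PathHomotopic.trans_homotopic {A P X : C} {q₀ q₁ : P ⟶ X} {u v w : A ⟶ X}
    (hq : W.Fib (pullback.lift q₀ q₁ (terminal.hom_ext _ _) :
      P ⟶ pullback (terminal.from X) (terminal.from X)))
    (hX : W.Fib (terminal.from X)) (h : PathHomotopic q₀ q₁ u v) (h' : Homotopic W v w) :
    PathHomotopic q₀ q₁ u w := by
  obtain ⟨I, j₀, j₁, hI, H, hH₀, hH₁⟩ := h'
  obtain ⟨c, hc₀, hc₁⟩ := hI.exists_const hX u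
  obtain ⟨L, hL₀, hL₁⟩ : PathHomotopic q₀ q₁ c H :=
    .of_comp_acyclicCof hI.2.1 hq (by rwa [hc₀, hH₀])
  exact ⟨j₁ ≫ L, by simp [hL₀, hc₁], by simp [hL₁, hH₁]⟩

lemma _root_.Homotopic.pathHomotopic_symm {A P X : C} {q₀ q₁ : P ⟶ X} {u v : A ⟶ X}
    (hP : W.IsPathObject X P q₀ q₁) (hX : W.Fib (terminal.from X)) (h : Homotopic W u v) :
    PathHomotopic q₀ q₁ v u := by
  obtain ⟨I, j₀, j₁, hI, H, hH₀, hH₁⟩ := h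
  obtain ⟨c, hc₀, hc₁⟩ := hI.exists_const hX u
  obtain ⟨L, hL₀, hL₁⟩ : PathHomotopic q₀ q₁ H c :=
    .of_comp_acyclicCof hI.2.1 hP.1 (by rw [hH₀, hc₀]; exact hP.pathHomotopic_refl u)
  exact ⟨j₁ ≫ L, by simp [hL₀, hH₁], by simp [hL₁, hc₁]⟩

lemma PathHomotopic.homotopic {A P X : C} {q₀ q₁ : P ⟶ X} {u v : A ⟶ X}
    (hA : W.Cof (initial.to A)) (hP : W.IsPathObject X P q₀ q₁) (hX : W.Fib (terminal.from X))
    (h : PathHomotopic q₀ q₁ u v) : Homotopic W u v := by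
  obtain ⟨I, j₀, j₁, hI⟩ := exists_isCylinder hA
  obtain ⟨c, hc₀, hc₁⟩ := hI.exists_const hX u
  obtain ⟨K, hK₀, hK₁⟩ := h
  obtain ⟨s, hs₀, hs₁⟩ := hP.2.2
  have := hP.2.1.2 _ hI.1
  obtain ⟨L, hL₀, hL₁, -⟩ := exists_lift_of_coprod_desc
    (show j₀ ≫ c = (u ≫ s) ≫ q₀ by simp [hs₀, hc₀]) (show j₁ ≫ c = K ≫ q₀ by simp [hK₀, hc₁])
  exact ⟨I, j₀, j₁, hI, L ≫ q₁, by simp [reassoc_of% hL₀, hs₁], by simp [reassoc_of% hL₁, hK₁]⟩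

lemma equivalence_homotopic_of_bifibrant {A X : C} (hA : W.Cof (initial.to A))
    (hXc : W.Cof (initial.to X)) (hXf : W.Fib (terminal.from X)) :
    Equivalence (Homotopic W : (A ⟶ X) → (A ⟶ X) → Prop) := by
  obtain ⟨P, q₀, q₁, hP⟩ := exists_isPathObject hXc hXf
  exact ⟨fun u => (hP.pathHomotopic_refl u).homotopic hA hP hXf,
    fun h => (h.pathHomotopic_symm hP hXf).homotopic hA hP hXf,
    fun h h' => (((hP.pathHomotopic_refl _).trans_homotopic hP.1 hXf h).trans_homotopic hP.1 hXf
      h').homotopic hA hP hXf⟩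

lemma _root_.Homotopic.comp {A X Y : C} {u v : A ⟶ X} (h : Homotopic W u v) (ρ : X ⟶ Y) :
    Homotopic W (u ≫ ρ) (v ≫ ρ) :=
  let ⟨I, j₀, j₁, hI, H, hH₀, hH₁⟩ := h
  ⟨I, j₀, j₁, hI, H ≫ ρ, by rw [reassoc_of% hH₀], by rw [reassoc_of% hH₁]⟩

lemma _root_.Homotopic.of_comp_acyclicFib {A X Y : C} {u v : A ⟶ X} {ρ : X ⟶ Y}
    (hρ : W.AcyclicFib ρ) (h : Homotopic W (u ≫ ρ) (v ≫ ρ)) : Homotopic W u v := by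
  obtain ⟨I, j₀, j₁, hI, H, hH₀, hH₁⟩ := h
  have := hρ.2 _ hI.1
  obtain ⟨L, hL₀, hL₁, -⟩ := exists_lift_of_coprod_desc hH₀ hH₁
  exact ⟨I, j₀, j₁, hI, L, hL₀, hL₁⟩

lemma homotopic_comp_acyclicFib_iff {A X Y : C} {ρ : X ⟶ Y} (hρ : W.AcyclicFib ρ)
    (u v : A ⟶ X) : Homotopic W (u ≫ ρ) (v ≫ ρ) ↔ Homotopic W u v :=
  ⟨Homotopic.of_comp_acyclicFib hρ, (Homotopic.comp · ρ)⟩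

end WeakModelStructure

/-- in a weak model category, the homotopy relation on morphisms from a
cofibrant object `A` to a fibrant object `X` is an equivalence relation. -/
theorem stmt6 (W : WeakModelStructure C) {A X : C}
    (hA : W.Cof (initial.to A)) (hX : W.Fib (terminal.from X)) :
    Equivalence (fun f g : A ⟶ X => Homotopic W f g) := by
  obtain ⟨X', ρ, hρ, hX'⟩ := W.exists_acyclicFib_from_cofibrant hX
  exact (W.equivalence_homotopic_of_bifibrant hA hX' (W.fibrant_dom hρ.1)).of_surjective
    (hρ.exists_lift hA) (W.homotopic_comp_acyclicFib_iff hρ)
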